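/- Eckmann–Hilton for monoid-valued sphere maps: let M be a topological monoid, k ≥ 1, and m ∈ M an element such that there is a homotopy H from (x,y) ↦ x·y to (x,y) ↦ y·x on the path component of m, whose track loop η(t) = H(m,m,t) acts trivially on π_k(M, m²). Then for any based maps φ, ψ : (Sᵏ,1) → (M,m), the pointwise product φ·ψ is based-homotopic to the concatenation (φ·c_m) ∗ (ψ·c_m), where c_m is the constant map at m. In particular, taking ψ = φ̄ the pointwise reverse, φ·φ̄ is nullhomotopic (based-homotopic to the constant map at m²). -/

import Mathlib

open scoped Topology Topology.Homotopy unitInterval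

/-- Pointwise product of two generalized loops in a topological monoid. -/
def ptMul {N : Type*} {M : Type*} [Monoid M] [TopologicalSpace M] [ContinuousMul M]
    {a b : M} (f : Ω^ N M a) (g : Ω^ N M b) : Ω^ N M (a * b) :=
  ⟨⟨fun y => f.1 y * g.1 y, f.1.continuous.mul g.1.continuous⟩, by
    intro y hy
    simp only [ContinuousMap.coe_mk]
    rw [f.2 y hy, g.2 y hy]⟩

/-! Eckmann–Hilton. Up to homotopy `φ = const ∗ φ` and `ψ = ψ ∗ const`, and the pointwise
product interchanges with concatenation, so `φ·ψ ≃ (m·ψ) ∗ (φ·m)`; it remains to deform `m·ψ`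
into `ψ·m` rel boundary. The anchoring homotopy `H(-, m, ψ)` does this freely, its boundary
running along the loop `η`, and by hypothesis `ψ·m` has a self-homotopy with the same boundary
track. A free homotopy `a ⇒ b` with boundary track `η` straightens into a homotopy rel boundary
from `a` to the `η`-collar of `b` (`b` shrunk into the half-size cube, the shell filled radially
by `η`), so `m·ψ` and `ψ·m` are homotopic to the same collar. -/

open ContinuousMap Set

noncomputable section

namespace Cube

variable {N : Type*}

/-- Blows the subcube of radius `1 - s / 2` up onto the whole cube (and clamps outside it). -/
def radialStretch (s : I) (y : I^N) : I^N :=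
  fun i => projIcc 0 1 zero_le_one (1 / 2 + ((y i : ℝ) - 1 / 2) / (1 - (s : ℝ) / 2))

theorem one_sub_half_pos (s : I) : (0 : ℝ) < 1 - (s : ℝ) / 2 := by
  linarith [s.2.2]

theorem continuous_radialStretch :
    Continuous fun q : I × I^N => radialStretch q.1 q.2 :=
  continuous_pi fun _ => continuous_projIcc.comp <| continuous_const.add <|
    Continuous.div (by fun_prop) (by fun_prop) fun q => (one_sub_half_pos q.1).ne'

theorem radialStretch_zero (y : I^N) : radialStretch 0 y = y := by
  funext i
  simp only [radialStretch, Icc.coe_zero, zero_div, sub_zero, div_one, add_sub_cancel,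
    projIcc_val]

theorem radialStretch_one (y : I^N) :
    radialStretch 1 y = fun i => projIcc 0 1 zero_le_one (2 * (y i : ℝ) - 1 / 2) := by
  funext i
  simp only [radialStretch, Icc.coe_one]
  congr 1
  ring

variable [Fintype N] [Nonempty N]

/-- Sup-norm distance from the centre of the cube, scaled so that the boundary is `radius = 1`. -/
def radius (y : I^N) : ℝ :=
  Finset.univ.sup' Finset.univ_nonempty fun i => |2 * (y i : ℝ) - 1|

theorem abs_two_mul_sub_one_le_radius (y : I^N) (i : N) : |2 * (y i : ℝ) - 1| ≤ radius y :=
  Finset.le_sup' (fun j => |2 * (y j : ℝ) - 1|) (Finset.mem_univ i)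

theorem radius_le_one (y : I^N) : radius y ≤ 1 := by
  refine Finset.sup'_le _ _ fun i _ => abs_le.mpr ⟨?_, ?_⟩ <;> linarith [(y i).2.1, (y i).2.2]

theorem exists_radius_eq (y : I^N) : ∃ i, radius y = |2 * (y i : ℝ) - 1| := by
  obtain ⟨i, -, h⟩ := Finset.exists_mem_eq_sup' Finset.univ_nonempty
    fun i => |2 * (y i : ℝ) - 1|
  exact ⟨i, h⟩

theorem radius_eq_one_of_mem_boundary {y : I^N} (hy : y ∈ boundary N) : radius y = 1 := by
  obtain ⟨i, hi⟩ := hy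
  refine le_antisymm (radius_le_one y) ?_
  have : |2 * (y i : ℝ) - 1| = 1 := by rcases hi with h | h <;> norm_num [h]
  exact this ▸ abs_two_mul_sub_one_le_radius y i

@[fun_prop]
theorem continuous_radius : Continuous (radius (N := N)) := by
  refine continuous_iff_continuousAt.mpr fun y => ?_
  refine Filter.Tendsto.finset_sup'_nhds_apply Finset.univ_nonempty fun i _ => ?_
  exact (show Continuous fun a : I^N => |2 * (a i : ℝ) - 1| by fun_prop).continuousAt

theorem radialStretch_mem_boundary {s : I} {y : I^N} (h : radius y = 1 - (s : ℝ) / 2) :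
    radialStretch s y ∈ boundary N := by
  obtain ⟨i, hi⟩ := exists_radius_eq y
  have hpos := one_sub_half_pos s
  refine ⟨i, ?_⟩
  rcases abs_eq hpos.le |>.mp (h ▸ hi).symm with h1 | h1
  · right
    have : ((y i : ℝ) - 1 / 2) / (1 - (s : ℝ) / 2) = 1 / 2 := by
      rw [div_eq_iff hpos.ne']; linarith
    simp only [radialStretch, this]
    norm_num [projIcc_right]
  · left
    have : ((y i : ℝ) - 1 / 2) / (1 - (s : ℝ) / 2) = -(1 / 2) := by
      rw [div_eq_iff hpos.ne']; linarith
    simp only [radialStretch, this]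
    norm_num [projIcc_left]

end Cube

namespace GenLoop

variable {N X : Type*} [TopologicalSpace X] {x : X}

theorem mem_pathComponent [Nonempty N] (f : Ω^ N X x) (y : I^N) : f y ∈ pathComponent x := by
  have : PathConnectedSpace I := isPathConnected_iff_pathConnectedSpace.mp <|
    (convex_Icc 0 1).isPathConnected (nonempty_Icc.mpr zero_le_one)
  have h : f (fun _ => 0) = x := GenLoop.boundary f _ ⟨Classical.arbitrary N, Or.inl rfl⟩
  exact ((PathConnectedSpace.joined _ y).map f.1.continuous).mem_pathComponent
    (by rw [coe_coe, h]; exact mem_pathComponent_self x)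

theorem homotopic_transAt_const_left [DecidableEq N] (i : N) (f : Ω^ N X x) :
    Homotopic (transAt i const f) f :=
  Quotient.exact (show (⟦transAt i const f⟧ : HomotopyGroup N X x) = ⟦f⟧ from
    have : Nonempty N := ⟨i⟩
    HomotopyGroup.mul_spec.symm.trans (mul_one _))

theorem homotopic_transAt_const_right [DecidableEq N] (i : N) (f : Ω^ N X x) :
    Homotopic (transAt i f const) f :=
  Quotient.exact (show (⟦transAt i f const⟧ : HomotopyGroup N X x) = ⟦f⟧ from
    have : Nonempty N := ⟨i⟩
    HomotopyGroup.mul_spec.symm.trans (one_mul _))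

section Collar

variable [Fintype N] [Nonempty N]

/-- `b` shrunk into the subcube of radius `1 / 2`, the outer shell filled radially by `γ`. -/
def collar (γ : Path x x) (b : Ω^ N X x) : Ω^ N X x :=
  ⟨⟨fun y => if Cube.radius y ≤ 1 / 2 then b (Cube.radialStretch 1 y)
      else γ (projIcc 0 1 zero_le_one (2 - 2 * Cube.radius y)),
    Continuous.if_le (b.1.continuous.comp <| Cube.continuous_radialStretch.comp <|
        continuous_const.prodMk continuous_id)
      (γ.continuous.comp <| continuous_projIcc.comp <| by fun_prop)
      Cube.continuous_radius continuous_const fun y hy => by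
        rw [GenLoop.boundary b _ (Cube.radialStretch_mem_boundary (by norm_num [hy]))]
        norm_num [hy, projIcc_right]⟩,
  fun y hy => by
    have h : Cube.radius y = 1 := Cube.radius_eq_one_of_mem_boundary hy
    norm_num [h, projIcc_left]⟩

/-- The homotopy runs `J` on the shrinking subcube of radius `1 - t / 2` and fills the shell
outside it radially by `γ`; on the sphere of radius `1 - t / 2` both give `γ t`. -/
theorem homotopic_collar {a b : Ω^ N X x} (γ : Path x x) (J : Homotopy a.1 b.1)
    (hJ : ∀ t, ∀ y ∈ Cube.boundary N, J (t, y) = γ t) : Homotopic a (collar γ b) := by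
  let K : Homotopy a.1 (collar γ b).1 :=
    { toFun := fun q => if Cube.radius q.2 ≤ 1 - (q.1 : ℝ) / 2
        then J (q.1, Cube.radialStretch q.1 q.2)
        else γ (projIcc 0 1 zero_le_one (2 - 2 * Cube.radius q.2))
      continuous_toFun := by
        refine Continuous.if_le (J.continuous.comp <| continuous_fst.prodMk
          Cube.continuous_radialStretch) (γ.continuous.comp <| continuous_projIcc.comp <|
            by fun_prop) (by fun_prop) (by fun_prop) fun q hq => ?_
        rw [hJ _ _ (Cube.radialStretch_mem_boundary hq), hq]
        congr 1
        rw [show (2 : ℝ) - 2 * (1 - (q.1 : ℝ) / 2) = q.1 by ring, projIcc_val]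
      map_zero_left := fun y => by
        simp only [Icc.coe_zero, zero_div, sub_zero, Cube.radius_le_one, if_true,
          Cube.radialStretch_zero, Homotopy.apply_zero]
      map_one_left := fun y => by
        simp only [Icc.coe_one, Homotopy.apply_one]
        norm_num
        rfl }
  refine ⟨{ toHomotopy := K, prop' := fun t y hy => ?_ }⟩
  have h : Cube.radius y = 1 := Cube.radius_eq_one_of_mem_boundary hy
  show (if Cube.radius y ≤ 1 - (t : ℝ) / 2 then J (t, Cube.radialStretch t y)
    else γ (projIcc 0 1 zero_le_one (2 - 2 * Cube.radius y))) = a y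
  split_ifs with ht
  · obtain rfl : t = 0 := Subtype.ext <| by
      rw [h] at ht; simp only [Icc.coe_zero]; linarith [t.2.1]
    rw [Cube.radialStretch_zero, J.apply_zero]; rfl
  · norm_num [h, projIcc_left, GenLoop.boundary a y hy]

theorem homotopic_of_track_eq {a b : Ω^ N X x} (γ : Path x x) (J : Homotopy a.1 b.1)
    (hJ : ∀ t, ∀ y ∈ Cube.boundary N, J (t, y) = γ t) (F : Homotopy b.1 b.1)
    (hF : ∀ t, ∀ y ∈ Cube.boundary N, F (t, y) = γ t) : Homotopic a b :=
  (homotopic_collar γ J hJ).trans (homotopic_collar γ F hF).symm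

end Collar

variable {M : Type*} [Monoid M] [TopologicalSpace M] [ContinuousMul M] {a b m : M}

theorem Homotopic.ptMul {f f' : Ω^ N M a} {g g' : Ω^ N M b} (hf : Homotopic f f')
    (hg : Homotopic g g') : Homotopic (_root_.ptMul f g) (_root_.ptMul f' g') := by
  obtain ⟨F⟩ := hf
  obtain ⟨G⟩ := hg
  exact ⟨{ toFun := fun q => F q * G q
           map_zero_left := fun y => by
             rw [F.apply_zero, G.apply_zero]; rfl
           map_one_left := fun y => by
             rw [F.apply_one, G.apply_one]; rfl
           prop' := fun t y hy => by
             simp only [ContinuousMap.coe_mk]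
             rw [F.eq_fst t hy, G.eq_fst t hy]; rfl }⟩

theorem ptMul_transAt [DecidableEq N] (i : N) (f f' : Ω^ N M a) (g g' : Ω^ N M b) :
    ptMul (transAt i f f') (transAt i g g') = transAt i (ptMul f g) (ptMul f' g') := by
  refine GenLoop.ext _ _ fun y => ?_
  change transAt i f f' y * transAt i g g' y = transAt i (ptMul f g) (ptMul f' g') y
  simp only [transAt, coe_copy]
  split_ifs <;> rfl

theorem ptMul_symmAt_const [DecidableEq N] (i : N) (f : Ω^ N M a) :
    ptMul (symmAt i f) (const (x := b)) = symmAt i (ptMul f const) :=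
  GenLoop.ext _ _ fun _ => rfl

theorem homotopic_const_ptMul_ptMul_const [Fintype N] [Nonempty N]
    {mul₁ mul₂ : C(pathComponent m × pathComponent m, M)}
    (hmul₁ : ∀ p, mul₁ p = (p.1 : M) * (p.2 : M)) (hmul₂ : ∀ p, mul₂ p = (p.2 : M) * (p.1 : M))
    (H : mul₁.Homotopy mul₂) (χ : Ω^ N M m)
    (F : Homotopy (ptMul χ (const (x := m))).1 (ptMul χ (const (x := m))).1)
    (hF : ∀ (t : I) y, y ∈ Cube.boundary N →
      F (t, y) = H (t, (⟨m, mem_pathComponent_self m⟩, ⟨m, mem_pathComponent_self m⟩))) :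
    Homotopic (ptMul const χ) (ptMul χ const) := by
  let m' : pathComponent m := ⟨m, mem_pathComponent_self m⟩
  let γ : Path (m * m) (m * m) :=
    { toFun := fun t => H (t, (m', m'))
      continuous_toFun := by fun_prop
      source' := by simp only [Homotopy.apply_zero, hmul₁]; rfl
      target' := by simp only [Homotopy.apply_one, hmul₂]; rfl }
  let J : Homotopy (ptMul const χ).1 (ptMul χ const).1 :=
    { toFun := fun q => H (q.1, (m', ⟨χ q.2, mem_pathComponent χ q.2⟩))
      continuous_toFun := by fun_prop
      map_zero_left := fun y => by rw [H.apply_zero, hmul₁]; rfl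
      map_one_left := fun y => by rw [H.apply_one, hmul₂]; rfl }
  refine homotopic_of_track_eq γ J (fun t y hy => ?_) F hF
  change H (t, (m', ⟨χ y, _⟩)) = H (t, (m', m'))
  congr
  exact GenLoop.boundary χ y hy

end GenLoop

namespace HomotopyGroup

variable {N M : Type*} [DecidableEq N] [Nonempty N] [Monoid M] [TopologicalSpace M]
  [ContinuousMul M] {m : M}

open GenLoop

theorem mk_ptMul_symmAt_const (i : N) (f : Ω^ N M m) :
    (⟦ptMul (symmAt i f) const⟧ : HomotopyGroup N M (m * m)) =
      ((⟦ptMul f (const (x := m))⟧)⁻¹ : HomotopyGroup N M (m * m)) := by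
  rw [ptMul_symmAt_const]
  exact inv_spec.symm

theorem mk_ptMul_eq_mul (φ ψ : Ω^ N M m)
    (hψ : Homotopic (ptMul const ψ) (ptMul ψ const)) :
    (⟦ptMul φ ψ⟧ : HomotopyGroup N M (m * m)) =
      ((· * ·) : _ → _ → HomotopyGroup N M (m * m)) ⟦ptMul φ const⟧ ⟦ptMul ψ const⟧ := by
  let i := Classical.arbitrary N
  have hunit : Homotopic (ptMul φ ψ) (ptMul (transAt i const φ) (transAt i ψ const)) :=
    (homotopic_transAt_const_left i φ).symm.ptMul (homotopic_transAt_const_right i ψ).symm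
  have hψ' : (⟦ptMul const ψ⟧ : HomotopyGroup N M (m * m)) = ⟦ptMul ψ const⟧ := Quotient.sound hψ
  rw [Quotient.sound hunit, ptMul_transAt, ← hψ']
  exact mul_spec.symm

end HomotopyGroup

end

theorem stmt_4_general (n : ℕ) {M : Type*} [Monoid M] [TopologicalSpace M] [ContinuousMul M]
    (m : M)
    (mul₁ mul₂ : C(pathComponent m × pathComponent m, M))
    (hmul₁ : ∀ p, mul₁ p = (p.1 : M) * (p.2 : M))
    (hmul₂ : ∀ p, mul₂ p = (p.2 : M) * (p.1 : M))
    (H : mul₁.Homotopy mul₂)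
    (hη : ∀ β : Ω^ (Fin (n + 1)) M (m * m),
      ∃ F : ContinuousMap.Homotopy β.1 β.1,
        ∀ (t : I) y, y ∈ Cube.boundary (Fin (n + 1)) →
          F (t, y) = H (t, (⟨m, mem_pathComponent_self m⟩, ⟨m, mem_pathComponent_self m⟩)))
    (φ ψ : Ω^ (Fin (n + 1)) M m) :
    ((⟦ptMul φ ψ⟧ : π_ (n + 1) M (m * m)) =
      ((· * ·) : π_ (n + 1) M (m * m) → π_ (n + 1) M (m * m) → π_ (n + 1) M (m * m))
        ⟦ptMul φ GenLoop.const⟧ ⟦ptMul ψ GenLoop.const⟧)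
    ∧ (⟦ptMul φ (GenLoop.symmAt 0 φ)⟧ : π_ (n + 1) M (m * m)) = (1 : π_ (n + 1) M (m * m))
    ∧ (⟦ptMul (GenLoop.symmAt 0 φ) φ⟧ : π_ (n + 1) M (m * m)) = (1 : π_ (n + 1) M (m * m)) := by
  have hcomm (χ : Ω^ (Fin (n + 1)) M m) :
      GenLoop.Homotopic (ptMul GenLoop.const χ) (ptMul χ GenLoop.const) :=
    let ⟨F, hF⟩ := hη (ptMul χ GenLoop.const)
    GenLoop.homotopic_const_ptMul_ptMul_const hmul₁ hmul₂ H χ F hF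
  have hmul (φ' ψ' : Ω^ (Fin (n + 1)) M m) :=
    HomotopyGroup.mk_ptMul_eq_mul φ' ψ' (hcomm ψ')
  refine ⟨hmul φ ψ, ?_, ?_⟩
  · rw [hmul, HomotopyGroup.mk_ptMul_symmAt_const]
    exact mul_inv_cancel (G := π_ (n + 1) M (m * m)) _
  · rw [hmul, HomotopyGroup.mk_ptMul_symmAt_const]
    exact inv_mul_cancel (G := π_ (n + 1) M (m * m)) _

/-- Eckmann–Hilton for monoid-valued sphere maps.  Let `M` be a topological
monoid, `k = n+1 ≥ 1`, and `m ∈ M` a `k`-anchored element: there is a homotopy `H` on the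
path component of `m` from `(x,y) ↦ x·y` to `(x,y) ↦ y·x`, taking values in the component
of `m²`, whose track loop `η(t) = H(m,m,t)` acts trivially on `π_k(M, m²)` (triviality of
the action is encoded, as in the definition of the `π₁`-action, by the existence for any
based `k`-loop `β` at `m²` of a free self-homotopy of `β` whose track on the basepoint
(here: on the boundary of the cube) is `η`).  Then for any `k`-loops `φ, ψ` at `m`, the
pointwise product `φ·ψ` is based homotopic to the concatenation `(φ·c_m) ∗ (ψ·c_m)`, i.e.
`⟦φ·ψ⟧ = ⟦φ·c_m⟧ * ⟦ψ·c_m⟧` in `π_k(M, m²)`; in particular, taking the pointwise reverse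
`φ̄` of `φ`, both `φ·φ̄` and `φ̄·φ` are nullhomotopic. -/
theorem stmt_4 (n : ℕ) {M : Type*} [Monoid M] [TopologicalSpace M] [ContinuousMul M]
    (m : M)
    (mul₁ mul₂ : C(pathComponent m × pathComponent m, M))
    (hmul₁ : ∀ p, mul₁ p = (p.1 : M) * (p.2 : M))
    (hmul₂ : ∀ p, mul₂ p = (p.2 : M) * (p.1 : M))
    (H : mul₁.Homotopy mul₂)
    (Hmem : ∀ t p, H (t, p) ∈ pathComponent (m * m))
    (hη : ∀ β : Ω^ (Fin (n + 1)) M (m * m),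
      ∃ F : ContinuousMap.Homotopy β.1 β.1,
        ∀ (t : I) y, y ∈ Cube.boundary (Fin (n + 1)) →
          F (t, y) = H (t, (⟨m, mem_pathComponent_self m⟩, ⟨m, mem_pathComponent_self m⟩)))
    (φ ψ : Ω^ (Fin (n + 1)) M m) :
    ((⟦ptMul φ ψ⟧ : π_ (n + 1) M (m * m)) =
      ((· * ·) : π_ (n + 1) M (m * m) → π_ (n + 1) M (m * m) → π_ (n + 1) M (m * m))
        ⟦ptMul φ GenLoop.const⟧ ⟦ptMul ψ GenLoop.const⟧)
    ∧ (⟦ptMul φ (GenLoop.symmAt 0 φ)⟧ : π_ (n + 1) M (m * m)) = (1 : π_ (n + 1) M (m * m))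
    ∧ (⟦ptMul (GenLoop.symmAt 0 φ) φ⟧ : π_ (n + 1) M (m * m)) = (1 : π_ (n + 1) M (m * m)) :=
  stmt_4_general n m mul₁ mul₂ hmul₁ hmul₂ H hη φ ψ
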